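/- arXiv:0905.0602 — 3 statements merged into one kernel-verified Lean document; each statement's English description precedes it below -/
import Mathlib

section
/- Let A be a genotype matrix and B a haplotype matrix explaining A that satisfies the three gamete property. Let i ≠ j be columns, g1 ∈ A_i and g2 ∈ A_j rows of A, and k, l columns with g1[k] = g1[l] = 2 and g2[k] = g2[l] = 2. Then the two rows h1, h1' of B explaining g1 satisfy h1[k] = h1[l] (g1 is resolved equally in columns k and l). -/
/-- A pair of haplotypes `h`, `h'` explains a genotype `g`:
entries `0`/`1` are copied, and at `2`-entries the haplotypes differ. -/
def ExplainsRow {m : ℕ} (h h' : Fin m → Bool) (g : Fin m → Fin 3) : Prop :=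
  ∀ j : Fin m,
    (g j = 0 → h j = false ∧ h' j = false) ∧
    (g j = 1 → h j = true ∧ h' j = true) ∧
    (g j = 2 → h j ≠ h' j)

/-- A `2n × m` haplotype matrix, given by its odd rows `B₁` and even rows `B₂`,
explains an `n × m` genotype matrix `A`. -/
def Explains {n m : ℕ} (B₁ B₂ : Fin n → Fin m → Bool) (A : Fin n → Fin m → Fin 3) : Prop :=
  ∀ r : Fin n, ExplainsRow (B₁ r) (B₂ r) (A r)

/-- The induced set `ind^B(i,j)` of a haplotype matrix: all pairs `xy` appearing
in columns `i` and `j` in some row of `B`. -/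
def indB {n m : ℕ} (B₁ B₂ : Fin n → Fin m → Bool) (i j : Fin m) : Set (Bool × Bool) :=
  {p | ∃ r : Fin n, (B₁ r i = p.1 ∧ B₁ r j = p.2) ∨ (B₂ r i = p.1 ∧ B₂ r j = p.2)}

/-- The three gamete property: `{01,10,11}` is never a subset of an induced set. -/
def ThreeGamete {n m : ℕ} (B₁ B₂ : Fin n → Fin m → Bool) : Prop :=
  ∀ i j : Fin m,
    ¬ (({(false, true), (true, false), (true, true)} : Set (Bool × Bool)) ⊆ indB B₁ B₂ i j)

/-- The four gamete property: no induced set equals `{00,01,10,11}`. -/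
def FourGamete {n m : ℕ} (B₁ B₂ : Fin n → Fin m → Bool) : Prop :=
  ∀ i j : Fin m,
    indB B₁ B₂ i j ≠
      ({(false, false), (false, true), (true, false), (true, true)} : Set (Bool × Bool))

/-- A genotype matrix admits a directed perfect phylogeny if some explaining
haplotype matrix satisfies the three gamete property. -/
def AdmitsDirectedPP {n m : ℕ} (A : Fin n → Fin m → Fin 3) : Prop :=
  ∃ B₁ B₂ : Fin n → Fin m → Bool, Explains B₁ B₂ A ∧ ThreeGamete B₁ B₂

/-- A genotype matrix admits a perfect phylogeny if some explaining
haplotype matrix satisfies the four gamete property. -/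
def AdmitsPP {n m : ℕ} (A : Fin n → Fin m → Fin 3) : Prop :=
  ∃ B₁ B₂ : Fin n → Fin m → Bool, Explains B₁ B₂ A ∧ FourGamete B₁ B₂

/-- Encode a haplotype entry as a genotype entry. -/
def boolToFin3 (b : Bool) : Fin 3 := if b then 1 else 0

/-- The induced set `ind^A(i,j)` of a genotype matrix. -/
def indA {n m : ℕ} (A : Fin n → Fin m → Fin 3) (i j : Fin m) : Set (Bool × Bool) :=
  {p | ∃ r : Fin n,
    (A r i = boolToFin3 p.1 ∧ A r j = boolToFin3 p.2) ∨
    (A r i = boolToFin3 p.1 ∧ A r j = 2) ∨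
    (A r i = 2 ∧ A r j = boolToFin3 p.2)}

/-- Column `i` of `A` is greater than column `j` (written `i ≻^A j`):
`ind^A(i,j) ⊆ {00,10,11}` and the two columns are not identical. -/
def ColGreater {n m : ℕ} (A : Fin n → Fin m → Fin 3) (i j : Fin m) : Prop :=
  indA A i j ⊆ ({(false, false), (true, false), (true, true)} : Set (Bool × Bool)) ∧
  ∃ r : Fin n, A r i ≠ A r j

/-- The set `A_i`: rows `g` of `A` with `g[i] = 2` such that `i` is `≻^A`-maximal
among the `2`-columns of `g` and has the least index among all such maximal columns. -/
def rowSet {n m : ℕ} (A : Fin n → Fin m → Fin 3) (i : Fin m) : Set (Fin n) :=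
  {r | A r i = 2 ∧
    (∀ j : Fin m, j ≠ i → A r j = 2 → ¬ ColGreater A j i) ∧
    (∀ j : Fin m, j ≠ i →
      (A r j = 2 ∧ ∀ k : Fin m, k ≠ j → A r k = 2 → ¬ ColGreater A k j) → i < j)}

/-!
Identify a column `c` of `B` with the set `ones c` of haplotypes carrying a `1` there. The three
gamete property makes these sets laminar, a strict inclusion `ones i ⊂ ones c` forces `c ≻^A i`, and
hence a maximal `2`-column `i` of a row absorbs every `2`-column of that row whose set meets
`ones i`. If `g₁` resolved `k, l` unequally, `ones k` and `ones l` would be disjoint, so `g₂`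
resolves them unequally as well, and in each of `g₁`, `g₂` the maximal column sides with `k` or
with `l`. If `i` and `j` side with the same column, then `ones i = ones j`, so columns `i` and `j`
of `A` coincide and the tie-break in the definitions of `A_i` and `A_j` gives `i < j < i`.
Otherwise `j` is a maximal `2`-column of `g₁` and `i` one of `g₂`, which again gives `i < j < i`.
-/

variable {n m : ℕ} {A : Fin n → Fin m → Fin 3} {B₁ B₂ : Fin n → Fin m → Bool}
  {r r₁ r₂ : Fin n} {c d i j k l : Fin m} {s s' : Bool}

/-- The `2n` haplotype rows of `B`: `(r, false)` is row `2r - 1` and `(r, true)` is row `2r`. -/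
def hap (B₁ B₂ : Fin n → Fin m → Bool) : Fin n × Bool → Fin m → Bool
  | (r, false) => B₁ r
  | (r, true) => B₂ r

def ones (B₁ B₂ : Fin n → Fin m → Bool) (c : Fin m) : Set (Fin n × Bool) :=
  {x | hap B₁ B₂ x c = true}

@[simp] theorem mem_ones {x : Fin n × Bool} : x ∈ ones B₁ B₂ c ↔ hap B₁ B₂ x c = true := Iff.rfl

/-- Column `i` is a `≻^A`-maximal `2`-column of row `r`; `r ∈ A_i` asks in addition that `i` be
the least such column. -/
def IsMaxTwoCol (A : Fin n → Fin m → Fin 3) (r : Fin n) (i : Fin m) : Prop :=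
  A r i = 2 ∧ ∀ j : Fin m, j ≠ i → A r j = 2 → ¬ ColGreater A j i

theorem fin3_cases (a : Fin 3) : a = 0 ∨ a = 1 ∨ a = 2 := by
  revert a; decide

theorem mem_indB_iff {p : Bool × Bool} :
    p ∈ indB B₁ B₂ c d ↔ ∃ x, hap B₁ B₂ x c = p.1 ∧ hap B₁ B₂ x d = p.2 := by
  constructor
  · rintro ⟨r, h | h⟩
    · exact ⟨(r, false), h⟩
    · exact ⟨(r, true), h⟩
  · rintro ⟨⟨r, _ | _⟩, h⟩
    · exact ⟨r, Or.inl h⟩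
    · exact ⟨r, Or.inr h⟩

section Explains

variable (hexp : Explains B₁ B₂ A)
include hexp

theorem hap_of_eq_boolToFin3 {a : Bool} (h : A r c = boolToFin3 a) :
    ∀ s, hap B₁ B₂ (r, s) c = a := by
  cases a
  · exact fun | false => ((hexp r c).1 h).1 | true => ((hexp r c).1 h).2
  · exact fun | false => ((hexp r c).2.1 h).1 | true => ((hexp r c).2.1 h).2

theorem hap_not_of_eq_two (h : A r c = 2) : ∀ s, hap B₁ B₂ (r, !s) c = !hap B₁ B₂ (r, s) c
  | false => Bool.eq_not_iff.2 ((hexp r c).2.2 h).symm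
  | true => Bool.eq_not_iff.2 ((hexp r c).2.2 h)

theorem exists_hap_eq_of_eq_two (h : A r c = 2) (b : Bool) : ∃ s, hap B₁ B₂ (r, s) c = b := by
  by_cases hb : hap B₁ B₂ (r, false) c = b
  · exact ⟨false, hb⟩
  · exact ⟨true, (hap_not_of_eq_two hexp h false).trans (by simpa using Bool.eq_not_iff.2 hb)⟩

theorem eq_of_mem_ones_of_eq_two (h : A r c = 2) (hs : (r, s) ∈ ones B₁ B₂ c)
    (hs' : (r, s') ∈ ones B₁ B₂ c) : s = s' := by
  by_contra hne
  obtain rfl : s' = !s := by simpa [Bool.eq_not_iff] using Ne.symm hne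
  simp_all [hap_not_of_eq_two hexp h s]

theorem eq_two_of_mem_of_not_mem (hs : (r, s) ∈ ones B₁ B₂ c) (hs' : (r, s') ∉ ones B₁ B₂ c) :
    A r c = 2 := by
  rcases fin3_cases (A r c) with h | h | h
  · simp [hap_of_eq_boolToFin3 hexp (a := false) h] at hs
  · simp [hap_of_eq_boolToFin3 hexp (a := true) h] at hs'
  · exact h

theorem apply_eq_ite (r : Fin n) (c : Fin m) :
    A r c = if B₁ r c = B₂ r c then boolToFin3 (B₁ r c) else 2 := by
  have h := hexp r c
  rcases fin3_cases (A r c) with h' | h' | h' <;> simp_all [boolToFin3]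

theorem col_eq_of_ones_eq (h : ones B₁ B₂ c = ones B₁ B₂ d) (r : Fin n) : A r c = A r d := by
  have hcd : ∀ x, hap B₁ B₂ x c = hap B₁ B₂ x d := fun x =>
    Bool.eq_iff_iff.2 (Set.ext_iff.1 h x)
  have h₁ : B₁ r c = B₁ r d := hcd (r, false)
  have h₂ : B₂ r c = B₂ r d := hcd (r, true)
  rw [apply_eq_ite hexp r c, apply_eq_ite hexp r d, h₁, h₂]

theorem indA_subset_indB : indA A c d ⊆ indB B₁ B₂ c d := by
  rintro ⟨a, b⟩ ⟨r, ⟨hc, hd⟩ | ⟨hc, hd⟩ | ⟨hc, hd⟩⟩ <;> rw [mem_indB_iff]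
  · exact ⟨(r, false), hap_of_eq_boolToFin3 hexp hc _, hap_of_eq_boolToFin3 hexp hd _⟩
  · obtain ⟨s, hs⟩ := exists_hap_eq_of_eq_two hexp hd b
    exact ⟨(r, s), hap_of_eq_boolToFin3 hexp hc _, hs⟩
  · obtain ⟨s, hs⟩ := exists_hap_eq_of_eq_two hexp hc a
    exact ⟨(r, s), hs, hap_of_eq_boolToFin3 hexp hd _⟩

theorem hap_eq_of_eq (hc : A r c = 2) (hd : A r d = 2) (h : B₁ r c = B₁ r d) :
    ∀ s, hap B₁ B₂ (r, s) c = hap B₁ B₂ (r, s) d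
  | false => h
  | true => by
    change hap B₁ B₂ (r, !false) c = hap B₁ B₂ (r, !false) d
    rw [hap_not_of_eq_two hexp hc, hap_not_of_eq_two hexp hd]
    exact congrArg (!·) h

theorem hap_eq_not_of_ne (hc : A r c = 2) (hd : A r d = 2) (h : B₁ r c ≠ B₁ r d) :
    ∀ s, hap B₁ B₂ (r, s) d = !hap B₁ B₂ (r, s) c
  | false => Bool.eq_not_iff.2 (Ne.symm h)
  | true => by
    change hap B₁ B₂ (r, !false) d = !hap B₁ B₂ (r, !false) c
    rw [hap_not_of_eq_two hexp hc, hap_not_of_eq_two hexp hd]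
    exact congrArg (!·) (Bool.eq_not_iff.2 (Ne.symm h))

theorem ones_inter_nonempty_of_eq (hc : A r c = 2) (hd : A r d = 2)
    (h : B₁ r c = B₁ r d) : (ones B₁ B₂ c ∩ ones B₁ B₂ d).Nonempty := by
  obtain ⟨s, hs⟩ := exists_hap_eq_of_eq_two hexp hc true
  exact ⟨(r, s), hs, (hap_eq_of_eq hexp hc hd h s).symm.trans hs⟩

end Explains

theorem ThreeGamete.subset_or_subset_or_disjoint (h3 : ThreeGamete B₁ B₂) (c d : Fin m) :
    ones B₁ B₂ c ⊆ ones B₁ B₂ d ∨ ones B₁ B₂ d ⊆ ones B₁ B₂ c ∨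
      Disjoint (ones B₁ B₂ c) (ones B₁ B₂ d) := by
  by_contra! h
  obtain ⟨hcd, hdc, hdisj⟩ := h
  obtain ⟨x, hxc, hxd⟩ := Set.not_subset.1 hcd
  obtain ⟨y, hyd, hyc⟩ := Set.not_subset.1 hdc
  obtain ⟨z, hzc, hzd⟩ := Set.not_disjoint_iff.1 hdisj
  simp only [mem_ones, Bool.not_eq_true] at hxc hxd hyd hyc hzc hzd
  refine h3 c d ?_
  simp only [Set.insert_subset_iff, Set.singleton_subset_iff]
  exact ⟨mem_indB_iff.2 ⟨y, hyc, hyd⟩, mem_indB_iff.2 ⟨x, hxc, hxd⟩, mem_indB_iff.2 ⟨z, hzc, hzd⟩⟩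

theorem ThreeGamete.disjoint_ones_of_ne (h3 : ThreeGamete B₁ B₂) (hexp : Explains B₁ B₂ A)
    (hc : A r c = 2) (hd : A r d = 2) (h : B₁ r c ≠ B₁ r d) :
    Disjoint (ones B₁ B₂ c) (ones B₁ B₂ d) := by
  obtain ⟨s, hs⟩ := exists_hap_eq_of_eq_two hexp hc true
  have hcd := hap_eq_not_of_ne hexp hc hd h
  rcases h3.subset_or_subset_or_disjoint c d with hsub | hsub | hdisj
  · simpa [hcd, hs] using hsub (show (r, s) ∈ ones B₁ B₂ c from hs)
  · have := hsub (show (r, !s) ∈ ones B₁ B₂ d by simp [hcd, hap_not_of_eq_two hexp hc, hs])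
    simp [hap_not_of_eq_two hexp hc, hs] at this
  · exact hdisj

theorem ColGreater.zero_one_not_mem (h : ColGreater A c j) : (false, true) ∉ indA A c j :=
  fun hm => by simpa using h.1 hm

theorem zero_one_mem_indA (hc : A r c ≠ 1) (hj : A r j ≠ 0) (h22 : ¬ (A r c = 2 ∧ A r j = 2)) :
    (false, true) ∈ indA A c j := by
  refine ⟨r, ?_⟩
  rcases fin3_cases (A r c) with hc' | hc' | hc' <;>
    rcases fin3_cases (A r j) with hj' | hj' | hj' <;> simp_all [boolToFin3]

theorem ColGreater.not_ssubset (hexp : Explains B₁ B₂ A) (h : ColGreater A c j) :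
    ¬ ones B₁ B₂ c ⊂ ones B₁ B₂ j := by
  rintro ⟨hcj, hjc⟩
  obtain ⟨⟨r, s⟩, hj, hc⟩ := Set.not_subset.1 hjc
  rw [mem_ones] at hj
  rw [mem_ones, Bool.not_eq_true] at hc
  by_cases h22 : A r c = 2 ∧ A r j = 2
  · have := hcj (show (r, !s) ∈ ones B₁ B₂ c by simp [hap_not_of_eq_two hexp h22.1, hc])
    simp [hap_not_of_eq_two hexp h22.2, hj] at this
  · refine h.zero_one_not_mem (zero_one_mem_indA (fun h1 => ?_) (fun h0 => ?_) h22)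
    · simp [hap_of_eq_boolToFin3 hexp (a := true) h1] at hc
    · simp [hap_of_eq_boolToFin3 hexp (a := false) h0] at hj

theorem colGreater_of_ssubset (hexp : Explains B₁ B₂ A) (h : ones B₁ B₂ i ⊂ ones B₁ B₂ c) :
    ColGreater A c i := by
  obtain ⟨hic, hci⟩ := h
  constructor
  · intro p hp
    obtain ⟨x, hxc, hxi⟩ := mem_indB_iff.1 (indA_subset_indB hexp hp)
    rcases p with ⟨_ | _, _ | _⟩
    · simp
    · have := hic (show x ∈ ones B₁ B₂ i from hxi)
      simp [hxc] at this
    · simp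
    · simp
  · obtain ⟨⟨r, s⟩, hc, hi⟩ := Set.not_subset.1 hci
    rw [mem_ones] at hc
    rw [mem_ones, Bool.not_eq_true] at hi
    refine ⟨r, fun heq => ?_⟩
    have hc2 : A r c = 2 := by
      rcases fin3_cases (A r c) with h | h | h
      · simp [hap_of_eq_boolToFin3 hexp (a := false) h] at hc
      · simp [hap_of_eq_boolToFin3 hexp (a := true) (heq ▸ h)] at hi
      · exact h
    have := hic (show (r, !s) ∈ ones B₁ B₂ i by simp [hap_not_of_eq_two hexp (heq ▸ hc2), hi])
    simp [hap_not_of_eq_two hexp hc2, hc] at this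

theorem ColGreater.subset_or_disjoint (h : ColGreater A c j) (hexp : Explains B₁ B₂ A)
    (h3 : ThreeGamete B₁ B₂) :
    ones B₁ B₂ j ⊆ ones B₁ B₂ c ∨ Disjoint (ones B₁ B₂ c) (ones B₁ B₂ j) := by
  rcases h3.subset_or_subset_or_disjoint c j with hcj | hjc | hdisj
  · exact Or.inl (eq_of_subset_of_not_ssubset hcj (h.not_ssubset hexp)).superset
  · exact Or.inl hjc
  · exact Or.inr hdisj

theorem isMaxTwoCol_of_mem_rowSet (hr : r ∈ rowSet A i) : IsMaxTwoCol A r i := ⟨hr.1, hr.2.1⟩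

theorem lt_of_mem_rowSet (hr : r ∈ rowSet A i) (hj : IsMaxTwoCol A r j) (hji : j ≠ i) : i < j :=
  hr.2.2 j hji hj

theorem IsMaxTwoCol.of_col_eq (hi : IsMaxTwoCol A r i) (heq : ∀ r, A r i = A r j) :
    IsMaxTwoCol A r j := by
  refine ⟨heq r ▸ hi.1, fun c hcj hc hcg => ?_⟩
  by_cases hci : c = i
  · subst hci
    obtain ⟨r', hne⟩ := hcg.2
    exact hne (heq r')
  · exact hi.2 c hci hc (by simpa only [ColGreater, indA, heq] using hcg)

theorem eq_of_mem_rowSet_of_col_eq (hr₁ : r₁ ∈ rowSet A i) (hr₂ : r₂ ∈ rowSet A j)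
    (heq : ∀ r, A r i = A r j) : i = j := by
  by_contra hij
  exact lt_asymm
    (lt_of_mem_rowSet hr₁ ((isMaxTwoCol_of_mem_rowSet hr₁).of_col_eq heq) (Ne.symm hij))
    (lt_of_mem_rowSet hr₂ ((isMaxTwoCol_of_mem_rowSet hr₂).of_col_eq fun r => (heq r).symm) hij)

section MaxTwoCol

variable (hexp : Explains B₁ B₂ A) (h3 : ThreeGamete B₁ B₂)
include hexp

theorem IsMaxTwoCol.eq_of_subset (hi : IsMaxTwoCol A r i) (hc : A r c = 2)
    (h : ones B₁ B₂ i ⊆ ones B₁ B₂ c) : ones B₁ B₂ i = ones B₁ B₂ c :=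
  eq_of_subset_of_not_ssubset h fun hss =>
    hi.2 c (fun hci => hss.ne (hci ▸ rfl)) hc (colGreater_of_ssubset hexp hss)

theorem IsMaxTwoCol.ones_eq_of_subset_of_disjoint (hi : IsMaxTwoCol A r i)
    (hij : ones B₁ B₂ i ⊆ ones B₁ B₂ j) (hjl : Disjoint (ones B₁ B₂ j) (ones B₁ B₂ l))
    (hl : A r l = 2) : ones B₁ B₂ i = ones B₁ B₂ j := by
  obtain ⟨s, hs⟩ := exists_hap_eq_of_eq_two hexp hi.1 true
  obtain ⟨s', hs'⟩ := exists_hap_eq_of_eq_two hexp hl true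
  have hj : A r j = 2 := eq_two_of_mem_of_not_mem hexp (hij hs) (Set.disjoint_right.1 hjl hs')
  exact hi.eq_of_subset hexp hj hij

include h3

theorem IsMaxTwoCol.subset_of_inter_nonempty (hi : IsMaxTwoCol A r i) (hc : A r c = 2)
    (hne : (ones B₁ B₂ c ∩ ones B₁ B₂ i).Nonempty) : ones B₁ B₂ c ⊆ ones B₁ B₂ i := by
  rcases h3.subset_or_subset_or_disjoint c i with hci | hic | hdisj
  · exact hci
  · exact (hi.eq_of_subset hexp hc hic).superset
  · exact absurd hdisj (Set.not_disjoint_iff_nonempty_inter.2 hne)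

theorem IsMaxTwoCol.subset_disjoint_or (hi : IsMaxTwoCol A r i) (hk : A r k = 2) (hl : A r l = 2)
    (hkl : B₁ r k ≠ B₁ r l) :
    (ones B₁ B₂ k ⊆ ones B₁ B₂ i ∧ Disjoint (ones B₁ B₂ i) (ones B₁ B₂ l)) ∨
      (ones B₁ B₂ l ⊆ ones B₁ B₂ i ∧ Disjoint (ones B₁ B₂ i) (ones B₁ B₂ k)) := by
  by_cases hik : B₁ r i = B₁ r k
  · refine Or.inl ⟨hi.subset_of_inter_nonempty hexp h3 hk
      (ones_inter_nonempty_of_eq hexp hk hi.1 hik.symm), ?_⟩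
    exact h3.disjoint_ones_of_ne hexp hi.1 hl (hik ▸ hkl)
  · have hil : B₁ r i = B₁ r l := by
      revert hkl hik; cases B₁ r i <;> cases B₁ r k <;> cases B₁ r l <;> decide
    refine Or.inr ⟨hi.subset_of_inter_nonempty hexp h3 hl
      (ones_inter_nonempty_of_eq hexp hl hi.1 hil.symm), ?_⟩
    exact h3.disjoint_ones_of_ne hexp hi.1 hk hik

theorem IsMaxTwoCol.of_disjoint (hj : IsMaxTwoCol A r₂ j)
    (hjk : Disjoint (ones B₁ B₂ j) (ones B₁ B₂ k)) (h1k : A r₁ k = 2) (h2k : A r₂ k = 2)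
    (hx' : (r₁, s') ∈ ones B₁ B₂ j) : IsMaxTwoCol A r₁ j := by
  obtain ⟨s, hx⟩ := exists_hap_eq_of_eq_two hexp h1k true
  obtain ⟨t, hy⟩ := exists_hap_eq_of_eq_two hexp h2k true
  obtain ⟨t', hy'⟩ := exists_hap_eq_of_eq_two hexp hj.1 true
  refine ⟨eq_two_of_mem_of_not_mem hexp hx' (Set.disjoint_right.1 hjk hx), fun c hcj h1c hcg => ?_⟩
  have h2c : A r₂ c = 1 := by
    rcases fin3_cases (A r₂ c) with h | h | h
    · exact absurd ⟨r₂, Or.inr (Or.inl ⟨h, hj.1⟩)⟩ hcg.zero_one_not_mem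
    · exact h
    · exact absurd hcg (hj.2 c hcj h)
  have hc : ∀ t, (r₂, t) ∈ ones B₁ B₂ c := hap_of_eq_boolToFin3 hexp (a := true) h2c
  have hjc : ones B₁ B₂ j ⊆ ones B₁ B₂ c := (hcg.subset_or_disjoint hexp h3).resolve_right
    (Set.not_disjoint_iff.2 ⟨(r₂, t'), hc t', hy'⟩)
  rcases h3.subset_or_subset_or_disjoint c k with hck | hkc | hck
  · exact Set.disjoint_left.1 hjk hx' (hck (hjc hx'))
  · obtain rfl := eq_of_mem_ones_of_eq_two hexp h1c (hkc hx) (hjc hx')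
    exact Set.disjoint_left.1 hjk hx' hx
  · exact Set.disjoint_left.1 hck (hc t) hy

end MaxTwoCol

theorem eq_of_mem_rowSet_of_subset_inter (hexp : Explains B₁ B₂ A) (h3 : ThreeGamete B₁ B₂)
    (hr₁ : r₁ ∈ rowSet A i) (hr₂ : r₂ ∈ rowSet A j)
    (hki : ones B₁ B₂ k ⊆ ones B₁ B₂ i) (hkj : ones B₁ B₂ k ⊆ ones B₁ B₂ j)
    (hil : Disjoint (ones B₁ B₂ i) (ones B₁ B₂ l)) (hjl : Disjoint (ones B₁ B₂ j) (ones B₁ B₂ l))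
    (h1k : A r₁ k = 2) (h1l : A r₁ l = 2) (h2l : A r₂ l = 2) : i = j := by
  refine eq_of_mem_rowSet_of_col_eq hr₁ hr₂ (col_eq_of_ones_eq hexp ?_)
  obtain ⟨s, hs⟩ := exists_hap_eq_of_eq_two hexp h1k true
  rcases h3.subset_or_subset_or_disjoint i j with hij | hji | hdisj
  · exact (isMaxTwoCol_of_mem_rowSet hr₁).ones_eq_of_subset_of_disjoint hexp hij hjl h1l
  · exact ((isMaxTwoCol_of_mem_rowSet hr₂).ones_eq_of_subset_of_disjoint hexp hji hil h2l).symm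
  · exact absurd (hkj hs) (Set.disjoint_left.1 hdisj (hki hs))

theorem lt_of_mem_rowSet_of_subset_of_disjoint (hexp : Explains B₁ B₂ A) (h3 : ThreeGamete B₁ B₂)
    (hr₁ : r₁ ∈ rowSet A i) (hj : IsMaxTwoCol A r₂ j) (hij : i ≠ j)
    (hlj : ones B₁ B₂ l ⊆ ones B₁ B₂ j) (hjk : Disjoint (ones B₁ B₂ j) (ones B₁ B₂ k))
    (h1k : A r₁ k = 2) (h1l : A r₁ l = 2) (h2k : A r₂ k = 2) : i < j := by
  obtain ⟨s, hs⟩ := exists_hap_eq_of_eq_two hexp h1l true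
  exact lt_of_mem_rowSet hr₁ (hj.of_disjoint hexp h3 hjk h1k h2k (hlj hs)) hij.symm

/-- Let `B` be a haplotype matrix explaining `A` that satisfies the three gamete
property, let `i ≠ j` be columns, `g₁ ∈ A_i` and `g₂ ∈ A_j` rows of `A`, and `k, l`
columns with `g₁[k] = g₁[l] = 2` and `g₂[k] = g₂[l] = 2`. Then `g₁` is resolved
equally in columns `k` and `l` by its explaining haplotypes. -/
theorem shared_two_entries_resolved_equally {n m : ℕ} (A : Fin n → Fin m → Fin 3)
    (B₁ B₂ : Fin n → Fin m → Bool) (hexp : Explains B₁ B₂ A) (h3 : ThreeGamete B₁ B₂)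
    (i j : Fin m) (hij : i ≠ j) (r₁ r₂ : Fin n)
    (hr₁ : r₁ ∈ rowSet A i) (hr₂ : r₂ ∈ rowSet A j)
    (k l : Fin m) (h1k : A r₁ k = 2) (h1l : A r₁ l = 2)
    (h2k : A r₂ k = 2) (h2l : A r₂ l = 2) :
    B₁ r₁ k = B₁ r₁ l := by
  by_contra h1kl
  have hkl := h3.disjoint_ones_of_ne hexp h1k h1l h1kl
  have h2kl : B₁ r₂ k ≠ B₁ r₂ l := fun h =>
    Set.not_disjoint_iff_nonempty_inter.2 (ones_inter_nonempty_of_eq hexp h2k h2l h) hkl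
  have hi := isMaxTwoCol_of_mem_rowSet hr₁
  have hj := isMaxTwoCol_of_mem_rowSet hr₂
  rcases hi.subset_disjoint_or hexp h3 h1k h1l h1kl with ⟨hki, hil⟩ | ⟨hli, hik⟩ <;>
    rcases hj.subset_disjoint_or hexp h3 h2k h2l h2kl with ⟨hkj, hjl⟩ | ⟨hlj, hjk⟩
  · exact hij (eq_of_mem_rowSet_of_subset_inter hexp h3 hr₁ hr₂ hki hkj hil hjl h1k h1l h2l)
  · exact lt_asymm
      (lt_of_mem_rowSet_of_subset_of_disjoint hexp h3 hr₁ hj hij hlj hjk h1k h1l h2k)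
      (lt_of_mem_rowSet_of_subset_of_disjoint hexp h3 hr₂ hi hij.symm hki hil h2l h2k h1l)
  · exact lt_asymm
      (lt_of_mem_rowSet_of_subset_of_disjoint hexp h3 hr₁ hj hij hkj hjl h1l h1k h2l)
      (lt_of_mem_rowSet_of_subset_of_disjoint hexp h3 hr₂ hi hij.symm hli hik h2k h2l h1k)
  · exact hij (eq_of_mem_rowSet_of_subset_inter hexp h3 hr₁ hr₂ hli hlj hik hjk h1l h1k h2k)
end

section
/- If a genotype matrix A has two columns i, j with {01,10,11} ⊆ ind^A(i,j), then A does not admit a directed perfect phylogeny. -/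
/-! At a `2`-entry the two haplotypes of a row take both values, so every pair that a row of `A`
contributes to `ind^A(i,j)` occurs in one of its two haplotypes: `ind^A(i,j) ⊆ ind^B(i,j)` for
every `B` explaining `A`, and a three-gamete violation in `A` is inherited by `B`. -/

lemma Bool.eq_or_eq_of_ne {x y : Bool} (hxy : x ≠ y) (b : Bool) : x = b ∨ y = b := by
  cases x <;> cases y <;> cases b <;> simp_all

section ExplainsRow

variable {m : ℕ} {h h' : Fin m → Bool} {g : Fin m → Fin 3}

lemma ExplainsRow.eq_of_eq_boolToFin3 (he : ExplainsRow h h' g) {k : Fin m} {b : Bool}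
    (hg : g k = boolToFin3 b) : h k = b ∧ h' k = b := by
  cases b
  · exact (he k).1 hg
  · exact (he k).2.1 hg

lemma ExplainsRow.eq_or_eq_of_eq_two (he : ExplainsRow h h' g) {k : Fin m} (hg : g k = 2)
    (b : Bool) : h k = b ∨ h' k = b :=
  Bool.eq_or_eq_of_ne ((he k).2.2 hg) b

end ExplainsRow

theorem indA_subset_indB_s8 {n m : ℕ} {B₁ B₂ : Fin n → Fin m → Bool} {A : Fin n → Fin m → Fin 3}
    (hE : Explains B₁ B₂ A) (i j : Fin m) : indA A i j ⊆ indB B₁ B₂ i j := by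
  rintro ⟨x, y⟩ ⟨r, ⟨hi, hj⟩ | ⟨hi, hj⟩ | ⟨hi, hj⟩⟩
  · exact ⟨r, .inl ⟨((hE r).eq_of_eq_boolToFin3 hi).1, ((hE r).eq_of_eq_boolToFin3 hj).1⟩⟩
  · obtain ⟨hi₁, hi₂⟩ := (hE r).eq_of_eq_boolToFin3 hi
    exact ⟨r, ((hE r).eq_or_eq_of_eq_two hj y).imp (⟨hi₁, ·⟩) (⟨hi₂, ·⟩)⟩
  · obtain ⟨hj₁, hj₂⟩ := (hE r).eq_of_eq_boolToFin3 hj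
    exact ⟨r, ((hE r).eq_or_eq_of_eq_two hi x).imp (⟨·, hj₁⟩) (⟨·, hj₂⟩)⟩

/-- If a genotype matrix `A` has two columns `i, j` with `{01,10,11} ⊆ ind^A(i,j)`,
then `A` does not admit a directed perfect phylogeny. -/
theorem not_dpph_of_three_gametes_in_indA {n m : ℕ} (A : Fin n → Fin m → Fin 3)
    (i j : Fin m)
    (h : ({(false, true), (true, false), (true, true)} : Set (Bool × Bool)) ⊆ indA A i j) :
    ¬ AdmitsDirectedPP A := by
  rintro ⟨B₁, B₂, hE, hT⟩
  exact hT i j (h.trans (indA_subset_indB_s8 hE i j))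
end

section
/- Let A be a genotype matrix and B a haplotype matrix explaining A that satisfies the three gamete property. Let g ∈ A_i be a row of A (so g[i] = 2), let {k,l} be an edge of the resolution graph G_i of weight w ∈ {0,1} with g[k] = g[l] = 2, and let h, h' be the two rows of B explaining g. Then h[i] = h[k] holds if, and only if, (h[i] = h[l] holds exactly when w = 0); i.e., the resolution of g relative to column i is the same in k and l when w = 0 and opposite when w = 1. -/
/-- `k` is a vertex of the resolution graph `G_i`. -/
def resVert {n m : ℕ} (A : Fin n → Fin m → Fin 3) (i k : Fin m) : Prop :=
  ∃ r ∈ rowSet A i, A r k = 2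

/-- The weighted edges of the resolution graph `G_i`: an edge `{k,l}` of weight `0`
or weight `1`, as prescribed by the construction of resolution graphs. -/
def resEdge {n m : ℕ} (A : Fin n → Fin m → Fin 3) (i : Fin m) (k l : Fin m) (w : ℕ) : Prop :=
  k ≠ l ∧ (∃ r ∈ rowSet A i, A r k = 2 ∧ A r l = 2) ∧
  ((w = 0 ∧
      (((true, true) : Bool × Bool) ∈ indA A k l ∨
        ∃ j : Fin m, j ≠ i ∧ ∃ r₂ ∈ rowSet A j, A r₂ k = 2 ∧ A r₂ l = 2)) ∨
   (w = 1 ∧ ({(false, true), (true, false)} : Set (Bool × Bool)) ⊆ indA A k l))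


/-!
Under the three gamete property a pair of columns `p, q` of `B` with `11 ∈ ind^B(p,q)` is
nested (`01` or `10` is missing), while a genotype with `2` in `p` and `q` puts `01` and `10`
into `ind^B(p,q)` when resolved in anti-phase and `11` when resolved in phase. Hence such a
genotype is resolved in phase exactly when `11 ∈ ind^B(p,q)`, and all genotypes with `2` in
`p` and `q` are resolved alike. A weight-1 edge supplies `01` and `10`, a weight-0 edge
supplies `11` unless it is witnessed by a row `g' ∈ A_j`, `j ≠ i`. In that case an
anti-phase resolution of `k, l` would put a `2` at `i` in `g'` and a `2` at `j` in `g`; this is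
impossible: resolved in phase, columns `i` and `j` would be nested and hence identical,
contradicting the tie-break `i < j`; resolved in anti-phase, `i` and `j` would both be maximal
`2`-columns of both rows, so `i < j < i`.
-/

section Genotype

variable {n m : ℕ} {A : Fin n → Fin m → Fin 3}

theorem mem_indA_of_eq_two {s : Fin n} {p q : Fin m} (x y : Bool)
    (hp : A s p = boolToFin3 x) (hq : A s q = 2) : (x, y) ∈ indA A p q :=
  ⟨s, .inr (.inl ⟨hp, hq⟩)⟩

theorem colGreater_irrefl (p : Fin m) : ¬ ColGreater A p p :=
  fun ⟨_, _, hs⟩ => hs rfl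

theorem colGreater_congr_right {p q : Fin m} (hcol : ∀ s, A s p = A s q) (c : Fin m) :
    ColGreater A c p ↔ ColGreater A c q := by
  simp only [ColGreater, indA, hcol]

theorem col_eq_of_not_colGreater {p q : Fin m} (h01 : (false, true) ∉ indA A p q)
    (hng : ¬ ColGreater A p q) : ∀ s, A s p = A s q := by
  by_contra! hne
  refine hng ⟨fun x hx => ?_, hne⟩
  rcases x with ⟨_ | _, _ | _⟩ <;> simp_all

theorem not_colGreater_of_mem_rowSet {i c : Fin m} {r : Fin n} (hr : r ∈ rowSet A i)
    (hc : A r c = 2) : ¬ ColGreater A c i := by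
  rcases eq_or_ne c i with rfl | hci
  · exact colGreater_irrefl c
  · exact hr.2.1 c hci hc

theorem col_eq_of_mem_rowSet {i p : Fin m} {r : Fin n} (hr : r ∈ rowSet A i)
    (hp : A r p = 2) (h01 : (false, true) ∉ indA A p i) : ∀ s, A s p = A s i :=
  col_eq_of_not_colGreater h01 (not_colGreater_of_mem_rowSet hr hp)

theorem lt_of_mem_rowSet_of_col_eq {i j : Fin m} {r : Fin n} (hij : i ≠ j)
    (hcol : ∀ s, A s i = A s j) (hr : r ∈ rowSet A i) : i < j :=
  hr.2.2 j hij.symm ⟨hcol r ▸ hr.1, fun c _ hc => by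
    rw [← colGreater_congr_right hcol]
    exact not_colGreater_of_mem_rowSet hr hc⟩

theorem not_mem_rowSet_of_col_eq {i j : Fin m} {r r₂ : Fin n} (hij : i ≠ j)
    (hcol : ∀ s, A s i = A s j) (hr : r ∈ rowSet A i) : r₂ ∉ rowSet A j := fun hr₂ =>
  lt_asymm (lt_of_mem_rowSet_of_col_eq hij hcol hr)
    (lt_of_mem_rowSet_of_col_eq hij.symm (fun s => (hcol s).symm) hr₂)

end Genotype

section Haplotype

variable {n m : ℕ} {A : Fin n → Fin m → Fin 3} {B₁ B₂ : Fin n → Fin m → Bool}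

theorem mem_indB_swap {p q : Fin m} {x y : Bool} :
    (x, y) ∈ indB B₁ B₂ q p ↔ (y, x) ∈ indB B₁ B₂ p q := by
  simp only [indB, Set.mem_ofPred_eq, and_comm]

theorem ThreeGamete.not_mem_of_mem (h3 : ThreeGamete B₁ B₂) {p q : Fin m}
    (h01 : (false, true) ∈ indB B₁ B₂ p q) (h10 : (true, false) ∈ indB B₁ B₂ p q) :
    (true, true) ∉ indB B₁ B₂ p q := fun h11 =>
  h3 p q (by simp [Set.insert_subset_iff, *])

theorem ThreeGamete.nested (h3 : ThreeGamete B₁ B₂) {p q : Fin m}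
    (h11 : (true, true) ∈ indB B₁ B₂ p q) :
    (false, true) ∉ indB B₁ B₂ p q ∨ (false, true) ∉ indB B₁ B₂ q p := by
  rw [mem_indB_swap (p := p) (q := q)]
  by_contra! h
  exact h3.not_mem_of_mem h.1 h.2 h11

namespace Explains

variable (hexp : Explains B₁ B₂ A)
include hexp

theorem snd_eq_not {s : Fin n} {p : Fin m} (h : A s p = 2) : B₂ s p = !B₁ s p :=
  Bool.eq_not.mpr ((hexp s p).2.2 h).symm

theorem eq_of_eq_boolToFin3 {s : Fin n} {p : Fin m} {x : Bool} (h : A s p = boolToFin3 x) :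
    B₁ s p = x ∧ B₂ s p = x := by
  cases x
  · exact (hexp s p).1 h
  · exact (hexp s p).2.1 h

theorem fst_eq_or_snd_eq {s : Fin n} {p : Fin m} (h : A s p = 2) (x : Bool) :
    B₁ s p = x ∨ B₂ s p = x := by
  rw [hexp.snd_eq_not h]
  cases x <;> cases B₁ s p <;> simp

theorem indA_subset_indB (p q : Fin m) : indA A p q ⊆ indB B₁ B₂ p q := by
  rintro ⟨x, y⟩ ⟨s, ⟨hp, hq⟩ | ⟨hp, hq⟩ | ⟨hp, hq⟩⟩
  · exact ⟨s, .inl ⟨(hexp.eq_of_eq_boolToFin3 hp).1, (hexp.eq_of_eq_boolToFin3 hq).1⟩⟩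
  · obtain ⟨hp₁, hp₂⟩ := hexp.eq_of_eq_boolToFin3 hp
    rcases hexp.fst_eq_or_snd_eq hq y with hq | hq
    · exact ⟨s, .inl ⟨hp₁, hq⟩⟩
    · exact ⟨s, .inr ⟨hp₂, hq⟩⟩
  · obtain ⟨hq₁, hq₂⟩ := hexp.eq_of_eq_boolToFin3 hq
    rcases hexp.fst_eq_or_snd_eq hp x with hp | hp
    · exact ⟨s, .inl ⟨hp, hq₁⟩⟩
    · exact ⟨s, .inr ⟨hp, hq₂⟩⟩

end Explains

variable (hexp : Explains B₁ B₂ A) (h3 : ThreeGamete B₁ B₂)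
include hexp h3

theorem resolution_eq_iff {s : Fin n} {p q : Fin m} (hp : A s p = 2) (hq : A s q = 2) :
    B₁ s p = B₁ s q ↔ (true, true) ∈ indB B₁ B₂ p q := by
  have h₁ : (B₁ s p, B₁ s q) ∈ indB B₁ B₂ p q := ⟨s, .inl ⟨rfl, rfl⟩⟩
  have h₂ : (!B₁ s p, !B₁ s q) ∈ indB B₁ B₂ p q := by
    rw [← hexp.snd_eq_not hp, ← hexp.snd_eq_not hq]
    exact ⟨s, .inr ⟨rfl, rfl⟩⟩
  generalize B₁ s p = x, B₁ s q = y at h₁ h₂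
  cases x <;> cases y
  · simpa using h₂
  · simpa using h3.not_mem_of_mem h₁ h₂
  · simpa using h3.not_mem_of_mem h₂ h₁
  · simpa using h₁

theorem resolution_eq_iff_resolution_eq {s s' : Fin n} {p q : Fin m}
    (hp : A s p = 2) (hq : A s q = 2) (hp' : A s' p = 2) (hq' : A s' q = 2) :
    B₁ s p = B₁ s q ↔ B₁ s' p = B₁ s' q :=
  (resolution_eq_iff hexp h3 hp hq).trans (resolution_eq_iff hexp h3 hp' hq').symm

theorem resolution_eq_of_one_two {s s' : Fin n} {c q : Fin m}
    (hc : A s c = 1) (hq : A s q = 2) (hc' : A s' c = 2) (hq' : A s' q = 2) :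
    B₁ s' c = B₁ s' q :=
  (resolution_eq_iff hexp h3 hc' hq').2
    (hexp.indA_subset_indB c q (mem_indA_of_eq_two true true hc hq))

theorem two_of_resolution_ne {i k l : Fin m} {r r₂ : Fin n} (hr : r ∈ rowSet A i)
    (hk : A r k = 2) (hl : A r l = 2) (hkl : B₁ r k ≠ B₁ r l)
    (hk₂ : A r₂ k = 2) (hl₂ : A r₂ l = 2) : A r₂ i = 2 := by
  wlog hik : B₁ r i = B₁ r k generalizing k l with H
  · refine H hl hk hkl.symm hl₂ hk₂ ?_
    revert hik hkl
    cases B₁ r i <;> cases B₁ r k <;> cases B₁ r l <;> decide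
  have no11 : (true, true) ∉ indB B₁ B₂ i l :=
    mt (resolution_eq_iff hexp h3 hr.1 hl).2 (hik ▸ hkl)
  rcases h3.nested ((resolution_eq_iff hexp h3 hk hr.1).1 hik.symm) with h01 | h01
  · rw [← col_eq_of_mem_rowSet hr hk (mt (hexp.indA_subset_indB k i ·) h01) r₂]
    exact hk₂
  · obtain h | h | h : A r₂ i = 0 ∨ A r₂ i = 1 ∨ A r₂ i = 2 := by omega
    · exact absurd (hexp.indA_subset_indB i k (mem_indA_of_eq_two false true h hk₂)) h01
    · exact absurd (hexp.indA_subset_indB i l (mem_indA_of_eq_two true true h hl₂)) no11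
    · exact h

theorem lt_of_mem_rowSet_of_resolution_ne {i j : Fin m} {r r₂ : Fin n} (hij : i ≠ j)
    (hr : r ∈ rowSet A i) (hr₂ : r₂ ∈ rowSet A j) (hrj : A r j = 2) (hr₂i : A r₂ i = 2)
    (hne : B₁ r i ≠ B₁ r j) : i < j := by
  refine hr.2.2 j hij.symm ⟨hrj, fun c _ hc hcj => ?_⟩
  obtain h | h | h : A r₂ c = 0 ∨ A r₂ c = 1 ∨ A r₂ c = 2 := by omega
  · simpa using hcj.1 (mem_indA_of_eq_two false true h hr₂.1)
  · exact hne ((resolution_eq_of_one_two hexp h3 h hr₂i hc hr.1).symm.trans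
      (resolution_eq_of_one_two hexp h3 h hr₂.1 hc hrj))
  · exact not_colGreater_of_mem_rowSet hr₂ h hcj

theorem ne_two_of_mem_rowSet {i j : Fin m} {r r₂ : Fin n} (hij : i ≠ j)
    (hr : r ∈ rowSet A i) (hr₂ : r₂ ∈ rowSet A j) (hrj : A r j = 2) : A r₂ i ≠ 2 := by
  intro hr₂i
  by_cases hal : B₁ r i = B₁ r j
  · rcases h3.nested ((resolution_eq_iff hexp h3 hr.1 hrj).1 hal) with h01 | h01
    · exact not_mem_rowSet_of_col_eq hij
        (col_eq_of_mem_rowSet hr₂ hr₂i (mt (hexp.indA_subset_indB i j ·) h01)) hr hr₂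
    · exact not_mem_rowSet_of_col_eq hij.symm
        (col_eq_of_mem_rowSet hr hrj (mt (hexp.indA_subset_indB j i ·) h01)) hr₂ hr
  · have hal₂ : B₁ r₂ j ≠ B₁ r₂ i :=
      Ne.symm (mt (resolution_eq_iff_resolution_eq hexp h3 hr.1 hrj hr₂i hr₂.1).2 hal)
    exact lt_asymm (lt_of_mem_rowSet_of_resolution_ne hexp h3 hij hr hr₂ hrj hr₂i hal)
      (lt_of_mem_rowSet_of_resolution_ne hexp h3 hij.symm hr₂ hr hr₂i hrj hal₂)

end Haplotype

theorem edge_weight_controls_relative_resolution_general {n m : ℕ} (A : Fin n → Fin m → Fin 3)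
    (B₁ B₂ : Fin n → Fin m → Bool) (hexp : Explains B₁ B₂ A) (h3 : ThreeGamete B₁ B₂)
    (i k l : Fin m) (r : Fin n) (hr : r ∈ rowSet A i)
    (hk : A r k = 2) (hl : A r l = 2)
    (w : ℕ) (he : resEdge A i k l w) :
    ((B₁ r i = B₁ r k) ↔ ((B₁ r i = B₁ r l) ↔ w = 0)) := by
  obtain ⟨-, -, ⟨rfl, hw0⟩ | ⟨rfl, hw1⟩⟩ := he
  · suffices hkl : B₁ r k = B₁ r l by simp [hkl]
    rcases hw0 with h11 | ⟨j, hji, r₂, hr₂, hk₂, hl₂⟩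
    · exact (resolution_eq_iff hexp h3 hk hl).2 (hexp.indA_subset_indB k l h11)
    · by_contra hkl
      have hkl₂ : B₁ r₂ k ≠ B₁ r₂ l :=
        mt (resolution_eq_iff_resolution_eq hexp h3 hk hl hk₂ hl₂).2 hkl
      exact ne_two_of_mem_rowSet hexp h3 hji.symm hr hr₂
        (two_of_resolution_ne hexp h3 hr₂ hk₂ hl₂ hkl₂ hk hl)
        (two_of_resolution_ne hexp h3 hr hk hl hkl hk₂ hl₂)
  · rw [Set.insert_subset_iff, Set.singleton_subset_iff] at hw1
    have hkl : B₁ r k ≠ B₁ r l := fun h =>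
      h3.not_mem_of_mem (hexp.indA_subset_indB k l hw1.1) (hexp.indA_subset_indB k l hw1.2)
        ((resolution_eq_iff hexp h3 hk hl).1 h)
    revert hkl
    cases B₁ r i <;> cases B₁ r k <;> cases B₁ r l <;> decide

/-- Let `B` be a haplotype matrix explaining `A` that satisfies the three gamete
property, let `g` (row `r` of `A`) lie in `A_i`, let `{k,l}` be an edge of the
resolution graph `G_i` of weight `w ∈ {0,1}` with `g[k] = g[l] = 2`, and let
`h = B₁ r` be the first explaining haplotype of `g`. Then `h[i] = h[k]` holds if,
and only if, (`h[i] = h[l]` holds exactly when `w = 0`): the resolution of `g`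
relative to column `i` is the same in `k` and `l` when `w = 0` and opposite
when `w = 1`. -/
theorem edge_weight_controls_relative_resolution {n m : ℕ} (A : Fin n → Fin m → Fin 3)
    (B₁ B₂ : Fin n → Fin m → Bool) (hexp : Explains B₁ B₂ A) (h3 : ThreeGamete B₁ B₂)
    (i k l : Fin m) (r : Fin n) (hr : r ∈ rowSet A i)
    (hk : A r k = 2) (hl : A r l = 2)
    (w : ℕ) (hw : w = 0 ∨ w = 1) (he : resEdge A i k l w) :
    ((B₁ r i = B₁ r k) ↔ ((B₁ r i = B₁ r l) ↔ w = 0)) :=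
  edge_weight_controls_relative_resolution_general A B₁ B₂ hexp h3 i k l r hr hk hl w he
end
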